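/- For n ≥ 2, the 2-domination stability of the friendship graph F_n equals 1; in particular, removing the central vertex changes the 2-domination number. -/
import Mathlib


open SimpleGraph

/-- `D` is a 2-dominating set of `G`: every vertex outside `D` has at least
two neighbors in `D`. -/
def IsTwoDomSet {V : Type*} (G : SimpleGraph V) (D : Set V) : Prop :=
  ∀ v ∉ D, 2 ≤ (G.neighborSet v ∩ D).ncard

/-- The 2-domination number `γ₂(G)`. -/
noncomputable def gamma2 {V : Type*} (G : SimpleGraph V) : ℕ :=
  sInf {k | ∃ D : Set V, IsTwoDomSet G D ∧ D.ncard = k}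

/-- The 2-domination stability `st_{γ₂}(G)`: the minimum number of vertices
whose removal changes the 2-domination number. -/
noncomputable def stGamma2 {V : Type*} (G : SimpleGraph V) : ℕ :=
  sInf {k | ∃ S : Set V, S.ncard = k ∧ gamma2 (G.induce Sᶜ) ≠ gamma2 G}

/-- The friendship graph `F_n`: `n` triangles sharing the central vertex `none`. -/
def friendshipGraph (n : ℕ) : SimpleGraph (Option (Fin n × Fin 2)) :=
  SimpleGraph.fromRel (fun x y =>
    match x, y with
    | none, _ => True
    | some (i, _), some (j, _) => i = j
    | _, none => False)

/-! ### Auxiliary lemmas -/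

lemma aux_isTwoDomSet_image {V W : Type*} {G : SimpleGraph V} {H : SimpleGraph W}
    (e : G ≃g H) {D : Set V} (h : IsTwoDomSet G D) : IsTwoDomSet H (⇑e '' D) := by
  intro v hv
  have hu : e.symm v ∉ D := by
    intro h'
    exact hv ⟨e.symm v, h', by simp⟩
  have key : H.neighborSet v ∩ (⇑e '' D) = ⇑e '' (G.neighborSet (e.symm v) ∩ D) := by
    ext x
    simp only [Set.mem_inter_iff, Set.mem_image, SimpleGraph.mem_neighborSet]
    constructor
    · rintro ⟨hadj, y, hy, rfl⟩
      exact ⟨y, ⟨e.map_adj_iff.mp (by simpa using hadj), hy⟩, rfl⟩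
    · rintro ⟨y, ⟨hadj, hy⟩, rfl⟩
      refine ⟨?_, y, hy, rfl⟩
      have := e.map_adj_iff.mpr hadj
      simpa using this
  rw [key, Set.ncard_image_of_injective _ e.injective]
  exact h _ hu

lemma aux_gamma2_eq_of_iso {V W : Type*} {G : SimpleGraph V} {H : SimpleGraph W}
    (e : G ≃g H) : gamma2 G = gamma2 H := by
  unfold gamma2
  congr 1
  ext k
  constructor
  · rintro ⟨D, hD, rfl⟩
    exact ⟨⇑e '' D, aux_isTwoDomSet_image e hD,
      Set.ncard_image_of_injective _ e.injective⟩
  · rintro ⟨D, hD, rfl⟩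
    exact ⟨⇑e.symm '' D, aux_isTwoDomSet_image e.symm hD,
      Set.ncard_image_of_injective _ e.symm.injective⟩

def auxInduceComplEmptyIso {V : Type*} (G : SimpleGraph V) :
    (G.induce ((∅ : Set V)ᶜ)) ≃g G where
  toEquiv :=
    { toFun := Subtype.val
      invFun := fun v => ⟨v, by simp⟩
      left_inv := fun _ => rfl
      right_inv := fun _ => rfl }
  map_rel_iff' := Iff.rfl

lemma aux_fg_adj_none (n : ℕ) (x : Fin n × Fin 2) :
    (friendshipGraph n).Adj none (some x) := by
  rw [friendshipGraph, SimpleGraph.fromRel_adj]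
  exact ⟨by simp, Or.inl trivial⟩

lemma aux_fg_adj_some (n : ℕ) (i j : Fin n) (a b : Fin 2) :
    (friendshipGraph n).Adj (some (i, a)) (some (j, b)) ↔ i = j ∧ a ≠ b := by
  rw [friendshipGraph, SimpleGraph.fromRel_adj]
  constructor
  · rintro ⟨hne, h⟩
    have hij : i = j := by
      rcases h with h | h
      · exact (h : i = j)
      · exact (h : j = i).symm
    subst hij
    exact ⟨rfl, fun hab => hne (by rw [hab])⟩
  · rintro ⟨rfl, hab⟩
    refine ⟨?_, Or.inl (show i = i from rfl)⟩
    simp only [ne_eq, Option.some.injEq, Prod.mk.injEq, not_and]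
    intro _
    exact hab

lemma aux_neighborSet_some (n : ℕ) (i : Fin n) (a : Fin 2) :
    (friendshipGraph n).neighborSet (some (i, a)) = {none, some (i, a + 1)} := by
  have fact : ∀ a b : Fin 2, a ≠ b ↔ b = a + 1 := by decide
  ext v
  cases v with
  | none =>
    constructor
    · intro _
      exact Set.mem_insert _ _
    · intro _
      exact ((friendshipGraph n).adj_comm _ _).mp (aux_fg_adj_none n (i, a))
  | some x =>
    obtain ⟨j, b⟩ := x
    simp only [SimpleGraph.mem_neighborSet, aux_fg_adj_some, Set.mem_insert_iff,
      Set.mem_singleton_iff]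
    constructor
    · rintro ⟨rfl, hab⟩
      exact Or.inr (by rw [(fact a b).mp hab])
    · rintro (h | h)
      · exact absurd h (by simp)
      · simp only [Option.some.injEq, Prod.mk.injEq] at h
        obtain ⟨rfl, rfl⟩ := h
        exact ⟨rfl, (fact a _).mpr rfl⟩

lemma aux_gamma2_friendship (n : ℕ) (hn : 1 ≤ n) :
    gamma2 (friendshipGraph n) = n + 1 := by
  classical
  have hinj : Function.Injective (fun i : Fin n => (some (i, (0 : Fin 2)) : Option (Fin n × Fin 2))) := by
    intro i j h
    simpa using h
  have hmem : (n + 1) ∈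
      {k | ∃ D, IsTwoDomSet (friendshipGraph n) D ∧ D.ncard = k} := by
    refine ⟨insert none (Set.range (fun i : Fin n => some (i, (0 : Fin 2)))), ?_, ?_⟩
    · intro v hv
      match v with
      | none => exact absurd (Set.mem_insert _ _) hv
      | some (i, b) =>
        have hb : b = 1 := by
          rcases (by decide : ∀ c : Fin 2, c = 0 ∨ c = 1) b with h | h
          · subst h
            exact absurd (Set.mem_insert_iff.mpr (Or.inr (Set.mem_range_self i))) hv
          · exact h
        subst hb
        rw [aux_neighborSet_some]
        have h2 : ((1 : Fin 2) + 1) = 0 := by decide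
        rw [h2]
        have hsub : ({none, some (i, (0 : Fin 2))} : Set (Option (Fin n × Fin 2))) ⊆
            insert none (Set.range (fun i : Fin n => some (i, (0 : Fin 2)))) := by
          intro x hx
          rcases Set.mem_insert_iff.mp hx with rfl | hx
          · exact Set.mem_insert _ _
          · rw [Set.mem_singleton_iff] at hx
            subst hx
            exact Set.mem_insert_iff.mpr (Or.inr (Set.mem_range_self i))
        rw [Set.inter_eq_self_of_subset_left hsub, Set.ncard_pair (by simp)]
    · rw [Set.ncard_insert_of_notMem (by simp), ← Set.image_univ,
        Set.ncard_image_of_injective _ hinj, Set.ncard_univ]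
      simp
  have hlb : ∀ k ∈ {k | ∃ D, IsTwoDomSet (friendshipGraph n) D ∧ D.ncard = k},
      n + 1 ≤ k := by
    rintro k ⟨D, hD, rfl⟩
    by_cases hnone : none ∈ D
    · have hch : ∀ i : Fin n, ∃ a : Fin 2, some (i, a) ∈ D := by
        intro i
        by_contra h
        push_neg at h
        have h0 := hD (some (i, 0)) (h 0)
        rw [aux_neighborSet_some] at h0
        have hsub : ({none, some (i, (0 : Fin 2) + 1)} : Set (Option (Fin n × Fin 2))) ∩ D
            ⊆ {none} := by
          rintro x ⟨hx1, hx2⟩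
          rcases Set.mem_insert_iff.mp hx1 with rfl | hx1
          · rfl
          · rw [Set.mem_singleton_iff] at hx1
            subst hx1
            exact absurd hx2 (h _)
        have hle := Set.ncard_le_ncard hsub (Set.finite_singleton _)
        rw [Set.ncard_singleton] at hle
        omega
      choose g hg using hch
      have hfinj : Function.Injective
          (fun i : Fin n => (some (i, g i) : Option (Fin n × Fin 2))) := by
        intro i j h
        simp only [Option.some.injEq, Prod.mk.injEq] at h
        exact h.1
      have hsub : insert none (Set.range (fun i : Fin n => (some (i, g i) : Option (Fin n × Fin 2)))) ⊆ D := by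
        intro x hx
        rcases Set.mem_insert_iff.mp hx with rfl | ⟨i, rfl⟩
        · exact hnone
        · exact hg i
      have hcard : (insert none (Set.range (fun i : Fin n => (some (i, g i) : Option (Fin n × Fin 2))))).ncard = n + 1 := by
        rw [Set.ncard_insert_of_notMem (by simp), ← Set.image_univ,
          Set.ncard_image_of_injective _ hfinj, Set.ncard_univ]
        simp
      have := Set.ncard_le_ncard hsub (Set.toFinite D)
      omega
    · have hall : ∀ x : Fin n × Fin 2, some x ∈ D := by
        rintro ⟨i, a⟩
        by_contra h
        have h0 := hD (some (i, a)) h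
        rw [aux_neighborSet_some] at h0
        have hsub : ({none, some (i, a + 1)} : Set (Option (Fin n × Fin 2))) ∩ D
            ⊆ {some (i, a + 1)} := by
          rintro x ⟨hx1, hx2⟩
          rcases Set.mem_insert_iff.mp hx1 with rfl | hx1
          · exact absurd hx2 hnone
          · exact hx1
        have hle := Set.ncard_le_ncard hsub (Set.finite_singleton _)
        rw [Set.ncard_singleton] at hle
        omega
      have hsub : Set.range (some : Fin n × Fin 2 → Option (Fin n × Fin 2)) ⊆ D := by
        rintro x ⟨y, rfl⟩
        exact hall y
      have hcard : (Set.range (some : Fin n × Fin 2 → Option (Fin n × Fin 2))).ncard = 2 * n := by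
        rw [← Set.image_univ, Set.ncard_image_of_injective _ (Option.some_injective _),
          Set.ncard_univ]
        simp [Nat.card_eq_fintype_card]
        ring
      have := Set.ncard_le_ncard hsub (Set.toFinite D)
      omega
  exact le_antisymm (Nat.sInf_le hmem) (le_csInf ⟨_, hmem⟩ hlb)

lemma aux_gamma2_induce (n : ℕ) :
    gamma2 ((friendshipGraph n).induce ({(none : Option (Fin n × Fin 2))}ᶜ)) = 2 * n := by
  classical
  have fact : ∀ a b : Fin 2, a ≠ b ↔ b = a + 1 := by decide
  set s : Set (Option (Fin n × Fin 2)) := {none}ᶜ with hs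
  have hcompl : ({none} : Set (Option (Fin n × Fin 2)))ᶜ.ncard = 2 * n := by
    have h1 := Set.ncard_add_ncard_compl ({none} : Set (Option (Fin n × Fin 2)))
    rw [Set.ncard_singleton] at h1
    have h2 : Nat.card (Option (Fin n × Fin 2)) = 2 * n + 1 := by
      simp [Nat.card_eq_fintype_card]
      ring
    rw [h2] at h1
    omega
  have hcard : (Set.univ : Set ↥s).ncard = 2 * n := by
    rw [Set.ncard_univ, Nat.card_coe_set_eq, hs, hcompl]
  have huniv : ∀ D : Set ↥s, IsTwoDomSet ((friendshipGraph n).induce s) D → D = Set.univ := by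
    intro D hD
    by_contra h
    obtain ⟨v, hv⟩ := Set.ne_univ_iff_exists_notMem D |>.mp h
    have h2 := hD v hv
    have hvne : v.val ≠ none := v.property
    obtain ⟨x, hx⟩ := Option.ne_none_iff_exists'.mp hvne
    obtain ⟨i, a⟩ := x
    have hother : (some (i, a + 1) : Option (Fin n × Fin 2)) ∈ s := by simp [hs]
    have hsub : ((friendshipGraph n).induce s).neighborSet v ⊆ {⟨some (i, a + 1), hother⟩} := by
      intro u hu
      have hadj : (friendshipGraph n).Adj v.val u.val := hu
      rw [hx] at hadj
      have hune : u.val ≠ none := u.property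
      obtain ⟨y, hy⟩ := Option.ne_none_iff_exists'.mp hune
      obtain ⟨j, b⟩ := y
      rw [hy, aux_fg_adj_some] at hadj
      obtain ⟨rfl, hab⟩ := hadj
      have hb : b = a + 1 := (fact a b).mp hab
      subst hb
      exact Set.mem_singleton_iff.mpr (Subtype.ext hy)
    have hsub2 : ((friendshipGraph n).induce s).neighborSet v ∩ D ⊆
        {⟨some (i, a + 1), hother⟩} := fun x hx => hsub hx.1
    have hle := Set.ncard_le_ncard hsub2 (Set.finite_singleton _)
    rw [Set.ncard_singleton] at hle
    omega
  have hmem : 2 * n ∈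
      {k | ∃ D, IsTwoDomSet ((friendshipGraph n).induce s) D ∧ D.ncard = k} :=
    ⟨Set.univ, fun v hv => absurd (Set.mem_univ v) hv, hcard⟩
  have hlb : ∀ k ∈ {k | ∃ D, IsTwoDomSet ((friendshipGraph n).induce s) D ∧ D.ncard = k},
      2 * n ≤ k := by
    rintro k ⟨D, hD, rfl⟩
    rw [huniv D hD, hcard]
  exact le_antisymm (Nat.sInf_le hmem) (le_csInf ⟨_, hmem⟩ hlb)

theorem stGamma2_friendship (n : ℕ) (hn : 2 ≤ n) :
    stGamma2 (friendshipGraph n) = 1 ∧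
      gamma2 ((friendshipGraph n).induce ({(none : Option (Fin n × Fin 2))}ᶜ)) ≠
        gamma2 (friendshipGraph n) := by
  have hn1 : 1 ≤ n := le_trans (by norm_num) hn
  have hA := aux_gamma2_friendship n hn1
  have hB := aux_gamma2_induce n
  have hne : gamma2 ((friendshipGraph n).induce ({(none : Option (Fin n × Fin 2))}ᶜ)) ≠
      gamma2 (friendshipGraph n) := by
    rw [hA, hB]
    omega
  refine ⟨?_, hne⟩
  unfold stGamma2
  apply le_antisymm
  · exact Nat.sInf_le ⟨{none}, Set.ncard_singleton _, hne⟩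
  · refine le_csInf ⟨1, {none}, Set.ncard_singleton _, hne⟩ ?_
    rintro k ⟨S, hS, hne'⟩
    by_contra h
    have hk : k = 0 := by omega
    subst hk
    have hS0 : S = ∅ := (Set.ncard_eq_zero (Set.toFinite S)).mp hS
    subst hS0
    exact hne' (aux_gamma2_eq_of_iso (auxInduceComplEmptyIso (friendshipGraph n)))
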